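/- arXiv:1607.05947 — 2 statements merged into one kernel-verified Lean document; each statement's English description precedes it below -/
import Mathlib

section
/- Color homography theorem: Suppose ρ' = α • (ρ * M) for some scalar α > 0 and invertible 3×3 matrix M (shading and linear color change). Let c = ρ * C and c' = ρ' * C with C = !![1,0,1; 0,1,1; 0,0,1], and let H = C⁻¹ * M * C. If the third components c 2 and c' 2 are nonzero, then the chromaticity (c' 0 / c' 2, c' 1 / c' 2) equals the projective image of (c 0 / c 2, c 1 / c 2) under H; that is, writing v = (c 0 / c 2, c 1 / c 2, 1) as a row vector and w = v * H, one has w 2 ≠ 0 and (w 0 / w 2, w 1 / w 2) = (c' 0 / c' 2, c' 1 / c' 2). -/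
open Matrix

theorem vecMul_vecMul_conj {n R : Type*} [Fintype n] [DecidableEq n] [CommRing R]
    (ρ : n → R) (M C : Matrix n n R) (hC : IsUnit C.det) :
    vecMul (vecMul ρ C) (C⁻¹ * M * C) = vecMul (vecMul ρ M) C := by
  rw [vecMul_vecMul, vecMul_vecMul, ← Matrix.mul_assoc, ← Matrix.mul_assoc,
    mul_nonsing_inv C hC, Matrix.one_mul]

theorem dehomogenize_eq_inv_smul {K : Type*} [Field K] (c : Fin 3 → K) (hc2 : c 2 ≠ 0) :
    ![c 0 / c 2, c 1 / c 2, 1] = (c 2)⁻¹ • c := by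
  ext i
  fin_cases i <;> simp [div_eq_inv_mul, inv_mul_cancel₀ hc2]

theorem smul_apply_div_smul_apply {ι K : Type*} [Field K] {t : K} (ht : t ≠ 0)
    (u : ι → K) (i j : ι) : (t • u) i / (t • u) j = u i / u j :=
  mul_div_mul_left _ _ ht

theorem color_homography_general (ρ ρ' : Fin 3 → ℝ) (α : ℝ) (hα : 0 < α)
    (M : Matrix (Fin 3) (Fin 3) ℝ)
    (hρ' : ρ' = α • Matrix.vecMul ρ M)
    (C : Matrix (Fin 3) (Fin 3) ℝ) (hC : C = !![1, 0, 1; 0, 1, 1; 0, 0, 1])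
    (c c' : Fin 3 → ℝ) (hc : c = Matrix.vecMul ρ C) (hc' : c' = Matrix.vecMul ρ' C)
    (H : Matrix (Fin 3) (Fin 3) ℝ) (hH : H = C⁻¹ * M * C)
    (hc2 : c 2 ≠ 0) (hc'2 : c' 2 ≠ 0) :
    let v : Fin 3 → ℝ := ![c 0 / c 2, c 1 / c 2, 1]
    let w := Matrix.vecMul v H
    w 2 ≠ 0 ∧ (w 0 / w 2, w 1 / w 2) = (c' 0 / c' 2, c' 1 / c' 2) := by
  intro v w
  have hCdet : IsUnit C.det := by
    simp [hC, det_fin_three]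
  have ht : (c 2)⁻¹ * α⁻¹ ≠ 0 := mul_ne_zero (inv_ne_zero hc2) (inv_ne_zero hα.ne')
  have hw : w = ((c 2)⁻¹ * α⁻¹) • c' := by
    calc w = (c 2)⁻¹ • vecMul (vecMul ρ M) C := by
          simp only [w, v, dehomogenize_eq_inv_smul c hc2, smul_vecMul, hH, hc,
            vecMul_vecMul_conj ρ M C hCdet]
      _ = ((c 2)⁻¹ * α⁻¹) • c' := by
          rw [hc', hρ', smul_vecMul, smul_smul, mul_assoc, inv_mul_cancel₀ hα.ne', mul_one]
  refine ⟨?_, ?_⟩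
  · rw [hw]
    exact mul_ne_zero ht hc'2
  · rw [hw, smul_apply_div_smul_apply ht, smul_apply_div_smul_apply ht]

theorem color_homography (ρ ρ' : Fin 3 → ℝ) (α : ℝ) (hα : 0 < α)
    (M : Matrix (Fin 3) (Fin 3) ℝ) (hM : IsUnit M)
    (hρ' : ρ' = α • Matrix.vecMul ρ M)
    (C : Matrix (Fin 3) (Fin 3) ℝ) (hC : C = !![1, 0, 1; 0, 1, 1; 0, 0, 1])
    (c c' : Fin 3 → ℝ) (hc : c = Matrix.vecMul ρ C) (hc' : c' = Matrix.vecMul ρ' C)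
    (H : Matrix (Fin 3) (Fin 3) ℝ) (hH : H = C⁻¹ * M * C)
    (hc2 : c 2 ≠ 0) (hc'2 : c' 2 ≠ 0) :
    let v : Fin 3 → ℝ := ![c 0 / c 2, c 1 / c 2, 1]
    let w := Matrix.vecMul v H
    w 2 ≠ 0 ∧ (w 0 / w 2, w 1 / w 2) = (c' 0 / c' 2, c' 1 / c' 2) :=
  color_homography_general ρ ρ' α hα M hρ' C hC c c' hc hc' H hH hc2 hc'2
end

section
/- Identifiability up to scale in the shading model: if D₁ A H₁ = D₂ A H₂ where D₁, D₂ are n×n diagonal matrices with nonzero diagonal entries, H₁, H₂ are invertible 3×3 matrices, A is an n×3 matrix with n ≥ 4 containing four rows every three of which are linearly independent, then there exists a nonzero scalar μ with H₁ = μ • H₂. -/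
/-!
Row `i` of `diagonal d₁ * A * H₁ = diagonal d₂ * A * H₂` says
`A i ᵥ* H₁ = (d₂ i / d₁ i) • (A i ᵥ* H₂)`, so every row of `A` is an eigenvector of the pair
`(x ↦ x ᵥ* H₁, x ↦ x ᵥ* H₂)`. Three of the four rows in general position form a basis, in which
the fourth row has no zero coordinate. Expanding the eigenvector equation of the fourth row in
the independent family of images of the basis under `x ↦ x ᵥ* H₂` forces all eigenvalues to
agree, hence `x ↦ x ᵥ* H₁` is a scalar multiple of `x ↦ x ᵥ* H₂`.
-/

open Matrix Module

theorem Module.Basis.repr_ne_zero_of_linearIndependent_update {ι K V : Type*} [DecidableEq ι]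
    [Field K] [AddCommGroup V] [Module K V] (b : Basis ι K V) {x : V} {k : ι}
    (h : LinearIndependent K (Function.update b k x)) : b.repr x k ≠ 0 := by
  intro hk
  refine linearIndependent_iff_notMem_span.mp h k ?_
  have himage : Function.update b k x '' (Set.univ \ {k}) = b '' (Set.univ \ {k}) :=
    Set.image_congr fun j hj => Function.update_of_ne hj.2 _ _
  rw [Function.update_self, himage, b.mem_span_image]
  intro j hj
  exact ⟨trivial, fun hjk => Finsupp.mem_support_iff.mp hj (hjk ▸ hk)⟩

theorem LinearMap.eq_smul_of_repr_ne_zero {ι K V W : Type*} [Fintype ι] [Field K]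
    [AddCommGroup V] [Module K V] [AddCommGroup W] [Module K W]
    (b : Basis ι K V) {T S : V →ₗ[K] W} (hS : Function.Injective S)
    (hb : ∀ k, ∃ c : K, T (b k) = c • S (b k)) {x : V} {μ : K} (hx : T x = μ • S x)
    (hrepr : ∀ k, b.repr x k ≠ 0) : T = μ • S := by
  choose c hc using hb
  have hSb : LinearIndependent K (S ∘ b) :=
    b.linearIndependent.map' S (LinearMap.ker_eq_bot.mpr hS)
  have hsum : ∑ k, (b.repr x k * c k - μ * b.repr x k) • S (b k) = 0 := by
    calc _ = T x - μ • S x := by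
          conv_rhs => rw [← b.sum_repr x]
          simp only [map_sum, map_smul, hc, sub_smul, Finset.sum_sub_distrib, smul_smul,
            Finset.smul_sum]
      _ = 0 := by rw [hx, sub_self]
  have hcμ (k : ι) : c k = μ :=
    mul_left_cancel₀ (hrepr k) <| by
      linear_combination Fintype.linearIndependent_iff.mp hSb _ hsum k
  exact b.ext fun k => by rw [hc, hcμ, LinearMap.smul_apply]

theorem exists_basis_repr_ne_zero_of_generalPosition {K V : Type*} [Field K]
    [AddCommGroup V] [Module K V] (hV : finrank K V = 3) (v : Fin 4 → V)
    (hgen : ∀ i j k : Fin 4, i ≠ j → i ≠ k → j ≠ k → LinearIndependent K ![v i, v j, v k]) :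
    ∃ b : Basis (Fin 3) K V, (∀ k, b k = v k.castSucc) ∧ ∀ k, b.repr (v 3) k ≠ 0 := by
  let b := basisOfLinearIndependentOfCardEqFinrank
    (hgen 0 1 2 (by decide) (by decide) (by decide)) (by rw [Fintype.card_fin, hV])
  have hb : ⇑b = ![v 0, v 1, v 2] := coe_basisOfLinearIndependentOfCardEqFinrank _ _
  refine ⟨b, fun k => by fin_cases k <;> simp [hb], fun k => ?_⟩
  refine b.repr_ne_zero_of_linearIndependent_update ?_
  rw [hb]
  fin_cases k
  · convert hgen 3 1 2 (by decide) (by decide) (by decide) using 1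
    ext i; fin_cases i <;> rfl
  · convert hgen 0 3 2 (by decide) (by decide) (by decide) using 1
    ext i; fin_cases i <;> rfl
  · convert hgen 0 1 3 (by decide) (by decide) (by decide) using 1
    ext i; fin_cases i <;> rfl

theorem Matrix.diagonal_mul_mul_apply {m n o R : Type*} [Fintype m] [Fintype n] [DecidableEq m]
    [CommSemiring R] (d : m → R) (A : Matrix m n R) (H : Matrix n o R) (i : m) :
    (diagonal d * A * H) i = d i • (A i ᵥ* H) := by
  ext j
  rw [Matrix.mul_assoc, diagonal_mul]
  rfl

theorem identifiability_up_to_scale_general {n : ℕ}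
    (A : Matrix (Fin n) (Fin 3) ℝ)
    (d₁ d₂ : Fin n → ℝ) (hd₁ : ∀ i, d₁ i ≠ 0) (hd₂ : ∀ i, d₂ i ≠ 0)
    (H₁ H₂ : Matrix (Fin 3) (Fin 3) ℝ) (hH₂ : IsUnit H₂)
    (f : Fin 4 → Fin n)
    (hgen : ∀ i j k : Fin 4, i ≠ j → i ≠ k → j ≠ k →
      LinearIndependent ℝ ![A (f i), A (f j), A (f k)])
    (heq : Matrix.diagonal d₁ * A * H₁ = Matrix.diagonal d₂ * A * H₂) :
    ∃ μ : ℝ, μ ≠ 0 ∧ H₁ = μ • H₂ := by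
  have hrow (i : Fin n) : A i ᵥ* H₁ = (d₂ i / d₁ i) • (A i ᵥ* H₂) := by
    have h := congrFun heq i
    rw [diagonal_mul_mul_apply, diagonal_mul_mul_apply] at h
    rw [div_eq_inv_mul, mul_smul, ← h, inv_smul_smul₀ (hd₁ i)]
  obtain ⟨b, hb, hrepr⟩ :=
    exists_basis_repr_ne_zero_of_generalPosition (finrank_fin_fun ℝ) (fun i => A (f i)) hgen
  have hvecMul : H₁.vecMulLinear = (d₂ (f 3) / d₁ (f 3)) • H₂.vecMulLinear :=
    LinearMap.eq_smul_of_repr_ne_zero b (vecMul_injective_iff_isUnit.mpr hH₂)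
      (fun k => ⟨_, by rw [hb]; exact hrow _⟩) (hrow _) hrepr
  refine ⟨d₂ (f 3) / d₁ (f 3), div_ne_zero (hd₂ _) (hd₁ _),
    vecMul_injective (funext fun x => ?_)⟩
  simpa [vecMul_smul] using LinearMap.congr_fun hvecMul x

theorem identifiability_up_to_scale {n : ℕ} (hn : 4 ≤ n)
    (A : Matrix (Fin n) (Fin 3) ℝ)
    (d₁ d₂ : Fin n → ℝ) (hd₁ : ∀ i, d₁ i ≠ 0) (hd₂ : ∀ i, d₂ i ≠ 0)
    (H₁ H₂ : Matrix (Fin 3) (Fin 3) ℝ) (hH₁ : IsUnit H₁) (hH₂ : IsUnit H₂)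
    (f : Fin 4 → Fin n) (hf : Function.Injective f)
    (hgen : ∀ i j k : Fin 4, i ≠ j → i ≠ k → j ≠ k →
      LinearIndependent ℝ ![A (f i), A (f j), A (f k)])
    (heq : Matrix.diagonal d₁ * A * H₁ = Matrix.diagonal d₂ * A * H₂) :
    ∃ μ : ℝ, μ ≠ 0 ∧ H₁ = μ • H₂ :=
  identifiability_up_to_scale_general A d₁ d₂ hd₁ hd₂ H₁ H₂ hH₂ f hgen heq
end
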